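/- Let λ, μ, ν be partitions with λ ⋖ μ, λ ⋖ ν, μ ≠ ν (each adding one box). Then ρ := sort(μ + ν − λ) = μ ∪ ν is a partition covering both μ and ν, and the square (λ, μ, ν, ρ) satisfies the affine local rule in both directions: ρ = sort(μ + ν − λ) and λ = sort(μ + ν − ρ). -/

import Mathlib

/-!
Since μ and ν add their boxes in different rows, μ + ν − λ is the componentwise maximum μ ∪ ν,
which is already weakly decreasing. So the sort in both local rules is the identity, and what
remains are the identities μ + ν − λ = μ + e_{r'} = ν + e_r and μ + ν − (μ + ν − λ) = λ.
-/

/-- The weakly decreasing rearrangement of an integer vector. -/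
def sortDesc {m : ℕ} (v : Fin m → ℤ) : Fin m → ℤ :=
  fun i => - ((fun j => - v j) ∘ Tuple.sort (fun j => - v j)) i

theorem sortDesc_eq_self {m : ℕ} {v : Fin m → ℤ} (h : Antitone v) : sortDesc v = v := by
  have hneg : Monotone (fun j => -v j) := fun i j hij => neg_le_neg (h hij)
  funext i
  simp [sortDesc, Tuple.sort_eq_refl_iff_monotone.2 hneg]

section AddOneBox

variable {ι : Type*} [DecidableEq ι] {lam mu nu : ι → ℤ} {r r' : ι}

theorem add_sub_eq_max_of_add_box_ne
    (hmu : ∀ s, mu s = lam s + if s = r then 1 else 0)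
    (hnu : ∀ s, nu s = lam s + if s = r' then 1 else 0) (hrr : r ≠ r') (t : ι) :
    mu t + nu t - lam t = max (mu t) (nu t) := by
  rw [hmu, hnu]
  split_ifs with h h'
  · exact absurd (h.symm.trans h') hrr
  all_goals omega

theorem add_box_ne_of_ne (hmu : ∀ s, mu s = lam s + if s = r then 1 else 0)
    (hnu : ∀ s, nu s = lam s + if s = r' then 1 else 0) (hne : mu ≠ nu) : r ≠ r' := by
  rintro rfl
  exact hne (funext fun s => (hmu s).trans (hnu s).symm)

end AddOneBox

theorem affine_local_rule_diamond_general (m : ℕ) (lam mu nu : Fin m → ℤ)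
    (hlam : Antitone lam) (hmu : Antitone mu) (hnu : Antitone nu)
    (hmucov : ∃ r, ∀ s, mu s = lam s + if s = r then 1 else 0)
    (hnucov : ∃ r, ∀ s, nu s = lam s + if s = r then 1 else 0)
    (hne : mu ≠ nu) :
    (∀ i, sortDesc (fun t => mu t + nu t - lam t) i = max (mu i) (nu i)) ∧
    Antitone (sortDesc fun t => mu t + nu t - lam t) ∧
    (∃ r, ∀ s, sortDesc (fun t => mu t + nu t - lam t) s = mu s + if s = r then 1 else 0) ∧
    (∃ r, ∀ s, sortDesc (fun t => mu t + nu t - lam t) s = nu s + if s = r then 1 else 0) ∧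
    (∀ i, lam i =
      sortDesc (fun t => mu t + nu t - sortDesc (fun u => mu u + nu u - lam u) t) i) := by
  obtain ⟨r, hr⟩ := hmucov
  obtain ⟨r', hr'⟩ := hnucov
  have hmax : (fun t => mu t + nu t - lam t) = fun t => max (mu t) (nu t) :=
    funext (add_sub_eq_max_of_add_box_ne hr hr' (add_box_ne_of_ne hr hr' hne))
  have hanti : Antitone fun t => mu t + nu t - lam t := hmax ▸ hmu.sup hnu
  rw [sortDesc_eq_self hanti]
  refine ⟨congrFun hmax, hanti, ⟨r', fun s => ?_⟩, ⟨r, fun s => ?_⟩, fun i => ?_⟩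
  · simp only [hr, hr']; ring
  · simp only [hr, hr']; ring
  · simp only [sub_sub_cancel, sortDesc_eq_self hlam]

/-- Diamond in Young's lattice via the affine local rule: if μ ≠ ν both cover λ (each adding
one box, as weakly decreasing nonnegative integer vectors), then ρ := sort(μ + ν − λ) is the
componentwise maximum μ ∪ ν, it is a partition covering both μ and ν, and the square
satisfies the affine local rule in both directions: ρ = sort(μ + ν − λ), λ = sort(μ + ν − ρ). -/
theorem affine_local_rule_diamond (m : ℕ) (lam mu nu : Fin m → ℤ)
    (hlam : Antitone lam) (hlam0 : ∀ i, 0 ≤ lam i) (hmu : Antitone mu) (hnu : Antitone nu)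
    (hmucov : ∃ r, ∀ s, mu s = lam s + if s = r then 1 else 0)
    (hnucov : ∃ r, ∀ s, nu s = lam s + if s = r then 1 else 0)
    (hne : mu ≠ nu) :
    (∀ i, sortDesc (fun t => mu t + nu t - lam t) i = max (mu i) (nu i)) ∧
    Antitone (sortDesc fun t => mu t + nu t - lam t) ∧
    (∃ r, ∀ s, sortDesc (fun t => mu t + nu t - lam t) s = mu s + if s = r then 1 else 0) ∧
    (∃ r, ∀ s, sortDesc (fun t => mu t + nu t - lam t) s = nu s + if s = r then 1 else 0) ∧
    (∀ i, lam i =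
      sortDesc (fun t => mu t + nu t - sortDesc (fun u => mu u + nu u - lam u) t) i) :=
  affine_local_rule_diamond_general m lam mu nu hlam hmu hnu hmucov hnucov hne
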